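/- Let S be a numerical semigroup and let I, I' be proper maximum sparse ideals of S with leaders λ and λ' respectively. If I ⊆ I', then λ - λ' ∈ S (in particular λ ≥ λ'). -/

import Mathlib

/-- `S` is a numerical semigroup: it contains `0`, is closed under addition,
and has finite complement in `ℕ`. -/
def IsNumericalSemigroup (S : Set ℕ) : Prop :=
  0 ∈ S ∧ (∀ a ∈ S, ∀ b ∈ S, a + b ∈ S) ∧ Sᶜ.Finite

/-- The genus of `S`: the number of gaps, i.e. of elements of `ℕ \ S`. -/
noncomputable def genus (S : Set ℕ) : ℕ := Sᶜ.ncard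

/-- The numConductor of `S`: the smallest integer `c` such that every integer `≥ c`
belongs to `S`. -/
noncomputable def numConductor (S : Set ℕ) : ℕ := sInf {c : ℕ | ∀ m, c ≤ m → m ∈ S}

/-- `I` is an ideal of `S`: a nonempty subset of `S` with `I + S ⊆ I`. -/
def IsIdeal (S I : Set ℕ) : Prop :=
  I.Nonempty ∧ I ⊆ S ∧ ∀ i ∈ I, ∀ s ∈ S, i + s ∈ I

/-- The Frobenius number of an ideal `I`: the largest integer not belonging to `I`. -/
noncomputable def frobeniusNumber (I : Set ℕ) : ℕ := sSup Iᶜ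

/-- `I` is a maximum sparse ideal of `S`: its Frobenius number equals
`2g - 1 + #(S \ I)` where `g` is the genus of `S`. -/
def IsMaxSparse (S I : Set ℕ) : Prop :=
  (frobeniusNumber I : ℤ) = 2 * (genus S : ℤ) - 1 + ((S \ I).ncard : ℤ)

/-- The leader of a proper ideal `I` of `S`: the largest element of `S \ I`. -/
noncomputable def leader (S I : Set ℕ) : ℕ := sSup (S \ I)

/-!
Let `F` be the Frobenius number of a maximum sparse ideal `I`. The sets `{x ≤ F | x ∈ S}` and
`{F - i | i ∈ I, i ≤ F}` are disjoint (an element of both would put `F` in `I + S ⊆ I`), and the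
defining equation `F + 1 = 2g + #(S \ I)` says exactly that their sizes add up to `F + 1`; hence
every `x ≤ F` lies in `S` or has `F - x ∈ I`. For proper `I` we have `0 ∉ I`, so `F ∈ S` and the
leader of `I` is `F`. Finally, if `λ - λ'` were a gap then `λ' = λ - (λ - λ') ∈ I ⊆ I'`, which is
impossible since `λ'` is the Frobenius number of `I'`.
-/

open Set

theorem le_frobeniusNumber {I : Set ℕ} (hfin : Iᶜ.Finite) {x : ℕ} (hx : x ∉ I) :
    x ≤ frobeniusNumber I :=
  le_csSup hfin.bddAbove hx

theorem ncard_inter_Iic_add_ncard_compl {A : Set ℕ} {n : ℕ} (h : Aᶜ ⊆ Iic n) :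
    (A ∩ Iic n).ncard + Aᶜ.ncard = n + 1 := by
  rw [← ncard_Iic_nat n, ← ncard_inter_add_ncard_sdiff_eq_ncard (Iic n) A, inter_comm,
    sdiff_eq, inter_eq_right.mpr h]

theorem ncard_image_sub_inter_Iic (A : Set ℕ) (n : ℕ) :
    ((n - ·) '' (A ∩ Iic n)).ncard = (A ∩ Iic n).ncard :=
  InjOn.ncard_image fun x hx y hy hxy => by
    simp only [mem_inter_iff, mem_Iic] at hx hy hxy
    omega

namespace IsIdeal

variable {S I : Set ℕ}

theorem compl_finite (hS : Sᶜ.Finite) (hI : IsIdeal S I) : Iᶜ.Finite := by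
  obtain ⟨⟨i, hi⟩, -, hadd⟩ := hI
  refine ((finite_Iio i).union (hS.image (i + ·))).subset fun n hn => ?_
  by_cases hni : n < i
  · exact Or.inl hni
  · refine Or.inr ⟨n - i, fun hs => hn ?_, by simp only; omega⟩
    simpa [Nat.add_sub_cancel' (not_lt.mp hni)] using hadd i hi _ hs

theorem zero_notMem (hI : IsIdeal S I) (hproper : I ≠ S) : 0 ∉ I :=
  fun h0 => hproper <| hI.2.1.antisymm fun s hs => by simpa using hI.2.2 0 h0 s hs

theorem ncard_compl (hI : IsIdeal S I) (hfin : Iᶜ.Finite) :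
    Iᶜ.ncard = genus S + (S \ I).ncard := by
  rw [← ncard_sdiff_add_ncard_of_subset (compl_subset_compl.mpr hI.2.1) hfin, add_comm,
    compl_sdiff_compl]
  rfl

end IsIdeal

namespace IsMaxSparse

variable {S I : Set ℕ}

theorem frobeniusNumber_add_one (hms : IsMaxSparse S I) :
    frobeniusNumber I + 1 = 2 * genus S + (S \ I).ncard := by
  unfold IsMaxSparse at hms
  omega

theorem compl_nonempty (hIS : I ⊆ S) (hms : IsMaxSparse S I) : Iᶜ.Nonempty := by
  by_contra hempty
  have hI : I = univ := compl_empty_iff.mp (not_nonempty_iff_eq_empty.mp hempty)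
  have hS : S = univ := eq_univ_of_univ_subset (hI ▸ hIS)
  simp [IsMaxSparse, frobeniusNumber, genus, hI, hS] at hms

theorem frobeniusNumber_notMem (hS : IsNumericalSemigroup S) (hI : IsIdeal S I)
    (hms : IsMaxSparse S I) : frobeniusNumber I ∉ I :=
  Nat.sSup_mem (hms.compl_nonempty hI.2.1) (hI.compl_finite hS.2.2).bddAbove

theorem inter_Iic_union_image_sub_eq_Iic (hS : IsNumericalSemigroup S) (hI : IsIdeal S I)
    (hms : IsMaxSparse S I) :
    S ∩ Iic (frobeniusNumber I) ∪ (frobeniusNumber I - ·) '' (I ∩ Iic (frobeniusNumber I)) =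
      Iic (frobeniusNumber I) := by
  set F := frobeniusNumber I
  have hfin := hI.compl_finite hS.2.2
  have hIc : Iᶜ ⊆ Iic F := fun y hy => le_frobeniusNumber hfin hy
  have hdisj : Disjoint (S ∩ Iic F) ((F - ·) '' (I ∩ Iic F)) := by
    refine disjoint_left.mpr ?_
    rintro _ ⟨hs, -⟩ ⟨i, ⟨hi, hiF⟩, rfl⟩
    refine hms.frobeniusNumber_notMem hS hI ?_
    simpa [Nat.add_sub_cancel' (mem_Iic.mp hiF)] using hI.2.2 i hi _ hs
  have hcardS := ncard_inter_Iic_add_ncard_compl ((compl_subset_compl.mpr hI.2.1).trans hIc)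
  have hcardI := ncard_inter_Iic_add_ncard_compl hIc
  have hgenus : genus S = Sᶜ.ncard := rfl
  have hcompl := hI.ncard_compl hfin
  have hF := hms.frobeniusNumber_add_one
  refine eq_of_subset_of_ncard_le ?_ ?_ (finite_Iic F)
  · exact union_subset inter_subset_right (image_subset_iff.mpr fun y _ => Nat.sub_le F y)
  · rw [ncard_union_eq hdisj, ncard_image_sub_inter_Iic, ncard_Iic_nat]
    omega

theorem mem_or_sub_mem (hS : IsNumericalSemigroup S) (hI : IsIdeal S I)
    (hms : IsMaxSparse S I) {x : ℕ} (hx : x ≤ frobeniusNumber I) :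
    x ∈ S ∨ frobeniusNumber I - x ∈ I := by
  have hxF : x ∈ Iic (frobeniusNumber I) := hx
  rw [← hms.inter_Iic_union_image_sub_eq_Iic hS hI] at hxF
  rcases hxF with ⟨hxS, -⟩ | ⟨i, ⟨hi, hiF⟩, rfl⟩
  · exact Or.inl hxS
  · exact Or.inr (by rwa [Nat.sub_sub_self (mem_Iic.mp hiF)])

theorem leader_eq_frobeniusNumber (hS : IsNumericalSemigroup S) (hI : IsIdeal S I)
    (hproper : I ≠ S) (hms : IsMaxSparse S I) : leader S I = frobeniusNumber I := by
  have hFS : frobeniusNumber I ∈ S :=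
    (hms.mem_or_sub_mem hS hI le_rfl).resolve_right (by simpa using hI.zero_notMem hproper)
  exact IsGreatest.csSup_eq ⟨⟨hFS, hms.frobeniusNumber_notMem hS hI⟩,
    fun x hx => le_frobeniusNumber (hI.compl_finite hS.2.2) hx.2⟩

end IsMaxSparse

/-- If `I ⊆ I'` are proper maximum sparse ideals with leaders `λ`, `λ'`, then
`λ' ≤ λ` and `λ - λ' ∈ S`. -/
theorem leader_sub_leader_mem (S I I' : Set ℕ)
    (hS : IsNumericalSemigroup S)
    (hI : IsIdeal S I) (hproperI : I ≠ S) (hmsI : IsMaxSparse S I)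
    (hI' : IsIdeal S I') (hproperI' : I' ≠ S) (hmsI' : IsMaxSparse S I')
    (hsub : I ⊆ I') :
    leader S I' ≤ leader S I ∧ leader S I - leader S I' ∈ S := by
  have hF' : frobeniusNumber I' ∉ I' := hmsI'.frobeniusNumber_notMem hS hI'
  have hle : frobeniusNumber I' ≤ frobeniusNumber I :=
    le_frobeniusNumber (hI.compl_finite hS.2.2) fun h => hF' (hsub h)
  rw [hmsI.leader_eq_frobeniusNumber hS hI hproperI,
    hmsI'.leader_eq_frobeniusNumber hS hI' hproperI']
  refine ⟨hle, (hmsI.mem_or_sub_mem hS hI (Nat.sub_le _ _)).resolve_right fun h => hF' (hsub ?_)⟩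
  rwa [Nat.sub_sub_self hle] at h
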